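/- Fix α > 1/2 and ν > 0, set R_n = 2·log(n/ν) and ρ_n(r) = α·sinh(α r)/(cosh(α R_n) − 1)·1_{0 ≤ r < R_n}. Then for every continuous non-negative function φ on ℝ with compact support, n·∫₀^∞ φ(r − (1 − 1/(2α))·R_n)·ρ_n(r) dr converges as n → ∞ to ∫_{−∞}^{∞} φ(u)·α·ν·e^{α u} du. -/

import Mathlib

open Real Filter MeasureTheory

/-- Radius of the random hyperbolic graph: `R_n = 2 log(n/ν)`. -/
noncomputable def Rn (ν : ℝ) (n : ℕ) : ℝ := 2 * Real.log (n / ν)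

/-- Radial density of the random hyperbolic graph:
`ρ_n(r) = α sinh(αr)/(cosh(αR_n) − 1)` for `0 ≤ r < R_n` and `0` otherwise. -/
noncomputable def rhon (α ν : ℝ) (n : ℕ) (r : ℝ) : ℝ :=
  if r < Rn ν n then α * Real.sinh (α * r) / (Real.cosh (α * Rn ν n) - 1) else 0

/-! For large `n` the window `supp φ + (1 - 1/(2α)) R_n` lies inside `(0, R_n)`, so neither
the truncation of `ρ_n` nor the restriction to `r > 0` is seen; after translating, the integral
is `α / (cosh (α R_n) - 1) * ∫ φ(u) sinh (α (u + (1 - 1/(2α)) R_n)) du`. Expanding `sinh` and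
using `n = ν e^{R_n/2}` gives the exact value
`α ν (∫ φ(u) e^{αu} du - e^{-(2α-1) R_n} ∫ φ(u) e^{-αu} du) / (1 - e^{-α R_n})²`,
and `α > 1/2` makes the correction term vanish. -/

open Set Function

lemma tendsto_Rn_atTop {ν : ℝ} (hν : 0 < ν) : Tendsto (Rn ν) atTop atTop :=
  (tendsto_log_atTop.comp <| (tendsto_div_const_atTop_of_pos hν).mpr
    tendsto_natCast_atTop_atTop).const_mul_atTop two_pos

lemma natCast_eq_mul_exp_Rn {ν : ℝ} (hν : 0 < ν) {n : ℕ} (hn : n ≠ 0) :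
    (n : ℝ) = ν * exp (Rn ν n / 2) := by
  rw [Rn, mul_div_cancel_left₀ _ two_ne_zero, exp_log (by positivity)]
  field_simp

lemma two_mul_cosh_sub_one (t : ℝ) : 2 * (cosh t - 1) = exp t * (1 - exp (-t)) ^ 2 := by
  rw [cosh_eq, exp_neg]
  field_simp
  ring

lemma integral_mul_sinh_add {φ : ℝ → ℝ} (hc : Continuous φ) (hsupp : HasCompactSupport φ)
    (a s : ℝ) :
    ∫ u, φ u * sinh (a * u + s) =
      (exp s * ∫ u, φ u * exp (a * u)) / 2 - (exp (-s) * ∫ u, φ u * exp (-(a * u))) / 2 := by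
  have hint : ∀ b : ℝ, Integrable fun u => φ u * exp (b * u) := fun b =>
    (hc.mul (by fun_prop)).integrable_of_hasCompactSupport hsupp.mul_right
  have h_neg := hint (-a)
  simp only [neg_mul] at h_neg
  rw [← integral_const_mul, ← integral_const_mul, ← integral_div, ← integral_div,
    ← integral_sub ((hint a).const_mul _ |>.div_const _) (h_neg.const_mul _ |>.div_const _)]
  congr 1 with u
  rw [sinh_eq, neg_add, exp_add, exp_add]
  ring

lemma setIntegral_Ioi_mul_eq_integral_shift {φ g h : ℝ → ℝ} {a b M : ℝ}
    (hM : support φ ⊆ Icc (-M) M) (ha : M < a) (hb : a + M < b) (hgh : ∀ r < b, g r = h r) :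
    ∫ r in Ioi 0, φ (r - a) * g r = ∫ u, φ u * h (u + a) := by
  have hφ : ∀ u, u ∉ Icc (-M) M → φ u = 0 := fun u hu => notMem_support.mp (hu <| hM ·)
  calc ∫ r in Ioi 0, φ (r - a) * g r = ∫ r in Ioi 0, φ (r - a) * h r := by
        refine setIntegral_congr_fun measurableSet_Ioi fun r _ => ?_
        rcases lt_or_ge r b with hr | hr
        · rw [hgh r hr]
        · rw [hφ (r - a) fun h => by linarith [h.2], zero_mul, zero_mul]
    _ = ∫ r, φ (r - a) * h r := by
        refine setIntegral_eq_integral_of_forall_compl_eq_zero fun r hr => ?_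
        rw [hφ (r - a) fun h => by linarith [h.1, notMem_Ioi.mp hr], zero_mul]
    _ = ∫ u, φ u * h (u + a) := by
        simpa only [sub_add_cancel] using
          integral_sub_right_eq_self (fun u => φ u * h (u + a)) a

lemma natCast_mul_integral_rhon_eq {α ν : ℝ} (hα : α ≠ 0) (hν : 0 < ν) {φ : ℝ → ℝ}
    (hc : Continuous φ) (hsupp : HasCompactSupport φ) {M : ℝ} (hM : support φ ⊆ Icc (-M) M)
    {n : ℕ} (hn : n ≠ 0) (hM₁ : M < (1 - 1 / (2 * α)) * Rn ν n) (hM₂ : M < Rn ν n / (2 * α)) :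
    n * ∫ r in Ioi 0, φ (r - (1 - 1 / (2 * α)) * Rn ν n) * rhon α ν n r =
      α * ν * ((∫ u, φ u * exp (α * u)) -
        exp (-((2 * α - 1) * Rn ν n)) * ∫ u, φ u * exp (-(α * u))) /
        (1 - exp (-(α * Rn ν n))) ^ 2 := by
  rw [natCast_eq_mul_exp_Rn hν hn]
  set R := Rn ν n
  set c := 1 - 1 / (2 * α)
  have hcR : c * R + R / (2 * α) = R := by ring
  have hαc : α * c = α - 1 / 2 := by simp only [c]; field_simp
  rw [setIntegral_Ioi_mul_eq_integral_shift (g := rhon α ν n)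
    (h := fun r => α * sinh (α * r) / (cosh (α * R) - 1)) hM hM₁ (b := R) (by linarith)
    fun r hr => if_pos hr]
  have hsinh : ∀ u, φ u * (α * sinh (α * (u + c * R)) / (cosh (α * R) - 1)) =
      α / (cosh (α * R) - 1) * (φ u * sinh (α * u + α * (c * R))) := fun u => by ring_nf
  have hcosh : cosh (α * R) - 1 = exp (α * R) * (1 - exp (-(α * R))) ^ 2 / 2 := by
    rw [← two_mul_cosh_sub_one]; ring
  have he₁ : exp (α * (c * R)) = exp (α * R) / exp (R / 2) := by
    rw [← exp_sub]; congr 1; linear_combination R * hαc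
  have he₂ : exp (-(α * (c * R))) = exp (-((2 * α - 1) * R)) * exp (α * R) / exp (R / 2) := by
    rw [← exp_add, ← exp_sub]; congr 1; linear_combination (-R) * hαc
  simp_rw [hsinh, integral_const_mul, integral_mul_sinh_add hc hsupp, hcosh]
  rw [he₁, he₂]
  field_simp

lemma tendsto_mul_sub_exp_mul_div_one_sub_exp_sq {a b : ℝ} (ha : 0 < a) (hb : 0 < b)
    (c A B : ℝ) :
    Tendsto (fun x => c * (A - exp (-(a * x)) * B) / (1 - exp (-(b * x))) ^ 2)
      atTop (nhds (c * A)) := by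
  have hexp : ∀ {d : ℝ}, 0 < d → Tendsto (fun x => exp (-(d * x))) atTop (nhds 0) := fun hd =>
    tendsto_exp_neg_atTop_nhds_zero.comp (tendsto_id.const_mul_atTop hd)
  have h := ((tendsto_const_nhds (x := A)).sub ((hexp ha).mul_const B) |>.const_mul c).div
    (((tendsto_const_nhds (x := (1 : ℝ))).sub (hexp hb)).pow 2) (by norm_num)
  simpa [Pi.div_def] using h

theorem stmt_14_general (α ν : ℝ) (hα : 1 / 2 < α) (hν : 0 < ν)
    (φ : ℝ → ℝ) (hc : Continuous φ) (hsupp : HasCompactSupport φ) :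
    Tendsto (fun n : ℕ =>
        (n : ℝ) * ∫ r in Set.Ioi (0:ℝ), φ (r - (1 - 1 / (2 * α)) * Rn ν n) * rhon α ν n r)
      atTop
      (nhds (∫ u : ℝ, φ u * (α * ν * Real.exp (α * u)))) := by
  obtain ⟨M, hM⟩ : ∃ M, support φ ⊆ Icc (-M) M := by
    obtain ⟨M, hM⟩ := hsupp.isBounded.subset_closedBall 0
    exact ⟨M, (subset_tsupport φ).trans (by simpa [Real.closedBall_eq_Icc] using hM)⟩
  have hα₀ : 0 < α := by linarith
  have hc₀ : 0 < 1 - 1 / (2 * α) := by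
    rw [sub_pos, div_lt_one (by positivity)]; linarith
  have hR := tendsto_Rn_atTop hν
  have hrhs : ∫ u, φ u * (α * ν * exp (α * u)) = α * ν * ∫ u, φ u * exp (α * u) := by
    rw [← integral_const_mul]; congr 1 with u; ring
  rw [hrhs]
  refine ((tendsto_mul_sub_exp_mul_div_one_sub_exp_sq (a := 2 * α - 1) (by linarith) hα₀ _ _
    (∫ u, φ u * exp (-(α * u)))).comp hR).congr' ?_
  filter_upwards [eventually_ne_atTop 0, hR.eventually_gt_atTop (M / (1 - 1 / (2 * α))),
    hR.eventually_gt_atTop (M * (2 * α))] with n hn hM₁ hM₂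
  exact (natCast_mul_integral_rhon_eq hα₀.ne' hν hc hsupp hM hn
    ((div_lt_iff₀' hc₀).mp hM₁) ((lt_div_iff₀ (by positivity)).mpr hM₂)).symm

/-- Intensity convergence in the regime `α > 1/2`: for every `φ ∈ C_c⁺(ℝ)`,
`n ∫₀^∞ φ(r − (1 − 1/(2α))R_n) ρ_n(r) dr → ∫_ℝ φ(u) α ν e^{αu} du`. -/
theorem stmt_14 (α ν : ℝ) (hα : 1 / 2 < α) (hν : 0 < ν)
    (φ : ℝ → ℝ) (hc : Continuous φ) (hsupp : HasCompactSupport φ) (hpos : 0 ≤ φ) :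
    Tendsto (fun n : ℕ =>
        (n : ℝ) * ∫ r in Set.Ioi (0:ℝ), φ (r - (1 - 1 / (2 * α)) * Rn ν n) * rhon α ν n r)
      atTop
      (nhds (∫ u : ℝ, φ u * (α * ν * Real.exp (α * u)))) :=
  stmt_14_general α ν hα hν φ hc hsupp
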